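/- Let ν₁, ν₂ ∈ ℝ and write s = 1+ν₁. The quadratic η² + 2(s²+ν₂)η + (s²−ν₂)² (obtained from the characteristic polynomial λ⁴ + 2(s²+ν₂)λ² + (s²−ν₂)² of B_ν by setting η = λ²) has discriminant 16 s² ν₂, and for ν₂ ≥ 0 its roots are η± = −(s²+ν₂) ± 2|s|√ν₂. Consequently: if ν₂ > 0, s ≠ 0 and s² ≠ ν₂, then all eigenvalues of B_ν are purely imaginary and nonzero; and if ν₂ < 0 and s ≠ 0, then every eigenvalue of B_ν has nonzero real part. Thus the sign of the detuning parameter ν₂ determines whether the eigenvalues lie on or off the imaginary axis. -/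

import Mathlib

/-! The characteristic polynomial of `B_ν` is biquadratic, `(λ²)² + 2(s² + ν₂)λ² + (s² - ν₂)²`,
so everything is decided by the real quadratic in `η = λ²`, whose discriminant is `16 s² ν₂`.
For `ν₂ > 0` both roots `-(s² + ν₂) ± 2|s|√ν₂` are negative, because
`s² + ν₂ - 2|s|√ν₂ = (|s| - √ν₂)² > 0` when `s² ≠ ν₂`; hence `λ² < 0` and `λ` is purely
imaginary and nonzero. For `ν₂ < 0` the quadratic has no real root, while a purely imaginary
`λ` would give the real value `λ² = -(Im λ)²`. -/

open Polynomial

/-- The matrix `B_ν` of the paper, written in terms of `s = 1 + ν₁`. -/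
def versalDeformation {R : Type*} [CommRing R] (s ν : R) : Matrix (Fin 4) (Fin 4) R :=
  !![0, -s, ν, 0; s, 0, 0, ν; -1, 0, 0, -s; 0, -1, s, 0]

section VersalDeformation

variable {R : Type*} [CommRing R]

theorem charpoly_versalDeformation (s ν : R) :
    (versalDeformation s ν).charpoly =
      X ^ 4 + C (2 * (s ^ 2 + ν)) * X ^ 2 + C ((s ^ 2 - ν) ^ 2) := by
  simp [Matrix.charpoly, Matrix.det_succ_row_zero, Fin.sum_univ_succ, Fin.succAbove,
    Matrix.charmatrix_apply, versalDeformation, Matrix.diagonal, map_ofNat C]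
  ring

theorem versalDeformation_map {S : Type*} [CommRing S] (f : R →+* S) (s ν : R) :
    (versalDeformation s ν).map f = versalDeformation (f s) (f ν) := by
  ext i j
  fin_cases i <;> fin_cases j <;> simp [versalDeformation]

theorem sq_sq_add_eq_zero_of_mem_spectrum_versalDeformation {K : Type*} [Field K] {s ν lam : K}
    (h : lam ∈ spectrum K (versalDeformation s ν)) :
    (lam ^ 2) ^ 2 + 2 * (s ^ 2 + ν) * lam ^ 2 + (s ^ 2 - ν) ^ 2 = 0 := by
  rw [Matrix.mem_spectrum_iff_isRoot_charpoly, charpoly_versalDeformation, IsRoot.def] at h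
  simpa [← pow_mul] using h

end VersalDeformation

theorem sq_add_two_mul_add_eq_zero_iff {R : Type*} [CommRing R] [NoZeroDivisors R]
    {p q d η : R} (hd : d ^ 2 = p ^ 2 - q) :
    η ^ 2 + 2 * p * η + q = 0 ↔ η = -p + d ∨ η = -p - d := by
  have hfactor : η ^ 2 + 2 * p * η + q = (η - (-p + d)) * (η - (-p - d)) := by
    linear_combination hd
  rw [hfactor, mul_eq_zero, sub_eq_zero, sub_eq_zero]

theorem sq_add_two_mul_add_pos {R : Type*} [CommRing R] [LinearOrder R] [IsStrictOrderedRing R]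
    {p q : R} (h : p ^ 2 < q) (η : R) : 0 < η ^ 2 + 2 * p * η + q := by
  nlinarith [sq_nonneg (η + p)]

theorem Complex.re_eq_zero_of_sq_eq_ofReal_of_neg {z : ℂ} {r : ℝ} (hr : r < 0)
    (h : z ^ 2 = r) : z.re = 0 := by
  have hre : z.re ^ 2 - z.im ^ 2 = r := by simpa [sq] using congrArg Complex.re h
  have him : z.re * z.im = 0 := by
    have h' := congrArg Complex.im h
    simp only [sq, Complex.mul_im, Complex.ofReal_im] at h'
    linarith
  by_contra hz
  have : z.im = 0 := (mul_eq_zero.1 him).resolve_left hz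
  nlinarith [sq_nonneg z.re]

theorem sq_two_mul_abs_mul_sqrt {s ν : ℝ} (hν : 0 ≤ ν) :
    (2 * |s| * √ν) ^ 2 = (s ^ 2 + ν) ^ 2 - (s ^ 2 - ν) ^ 2 := by
  rw [mul_pow, mul_pow, sq_abs, Real.sq_sqrt hν]
  ring

theorem two_mul_abs_mul_sqrt_lt {s ν : ℝ} (hν : 0 ≤ ν) (hsν : s ^ 2 ≠ ν) :
    2 * |s| * √ν < s ^ 2 + ν := by
  have hne : |s| ≠ √ν := fun h => hsν (by rw [← sq_abs, h, Real.sq_sqrt hν])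
  have hsq : s ^ 2 + ν - 2 * |s| * √ν = (|s| - √ν) ^ 2 := by
    rw [sub_sq, sq_abs, Real.sq_sqrt hν]
    ring
  have := sq_pos_of_ne_zero (sub_ne_zero.2 hne)
  linarith

theorem re_eq_zero_and_ne_zero_of_mem_spectrum_versalDeformation {s ν : ℝ} (hν : 0 < ν)
    (hsν : s ^ 2 ≠ ν) {lam : ℂ} (h : lam ∈ spectrum ℂ (versalDeformation (s : ℂ) ν)) :
    lam.re = 0 ∧ lam ≠ 0 := by
  set d := 2 * |s| * √ν
  have hd : ((d : ℝ) : ℂ) ^ 2 = ((s : ℂ) ^ 2 + ν) ^ 2 - ((s : ℂ) ^ 2 - ν) ^ 2 := by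
    exact_mod_cast sq_two_mul_abs_mul_sqrt (s := s) hν.le
  have hd_lt : d < s ^ 2 + ν := two_mul_abs_mul_sqrt_lt hν.le hsν
  have hd_nonneg : 0 ≤ d := by positivity
  obtain ⟨r, hr, hlam⟩ : ∃ r : ℝ, r < 0 ∧ lam ^ 2 = r := by
    rcases (sq_add_two_mul_add_eq_zero_iff hd).1
      (sq_sq_add_eq_zero_of_mem_spectrum_versalDeformation h) with hlam | hlam
    · exact ⟨-(s ^ 2 + ν) + d, by linarith, by rw [hlam]; push_cast; ring⟩
    · exact ⟨-(s ^ 2 + ν) - d, by linarith, by rw [hlam]; push_cast; ring⟩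
  refine ⟨Complex.re_eq_zero_of_sq_eq_ofReal_of_neg hr hlam, ?_⟩
  rintro rfl
  norm_num at hlam
  exact hr.ne (by exact_mod_cast hlam.symm)

theorem re_ne_zero_of_mem_spectrum_versalDeformation {s ν : ℝ} (hν : ν < 0) (hs : s ≠ 0)
    {lam : ℂ} (h : lam ∈ spectrum ℂ (versalDeformation (s : ℂ) ν)) : lam.re ≠ 0 := by
  intro hre
  have hlam : lam ^ 2 = ((-lam.im ^ 2 : ℝ) : ℂ) := by
    apply Complex.ext <;> simp [sq, hre]
  have hroot : (-lam.im ^ 2) ^ 2 + 2 * (s ^ 2 + ν) * (-lam.im ^ 2) + (s ^ 2 - ν) ^ 2 = 0 := by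
    have := sq_sq_add_eq_zero_of_mem_spectrum_versalDeformation h
    rw [hlam] at this
    exact_mod_cast this
  have hdisc : (s ^ 2 + ν) ^ 2 < (s ^ 2 - ν) ^ 2 := by nlinarith [sq_pos_of_ne_zero hs]
  exact (sq_add_two_mul_add_pos hdisc _).ne' hroot

/-- Writing `s = 1 + ν₁`, the quadratic `η² + 2(s²+ν₂)η + (s²-ν₂)²`
(obtained from the characteristic polynomial of the versal deformation `B_ν` by
`η = λ²`) has discriminant `16s²ν₂`, and for `ν₂ ≥ 0` its roots are
`η± = -(s²+ν₂) ± 2|s|√ν₂`. Consequently, if `ν₂ > 0`, `s ≠ 0`, `s² ≠ ν₂`, every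
eigenvalue of `B_ν` is purely imaginary and nonzero, while if `ν₂ < 0` and `s ≠ 0`,
every eigenvalue of `B_ν` has nonzero real part: the sign of the detuning parameter
`ν₂` decides whether the eigenvalues lie on or off the imaginary axis. -/
theorem stmt_19 (ν₁ ν₂ : ℝ) (s : ℝ) (hs : s = 1 + ν₁)
    (Bν : Matrix (Fin 4) (Fin 4) ℝ)
    (hBν : Bν = !![0, -(1+ν₁), ν₂, 0;
                   1+ν₁, 0, 0, ν₂;
                   -1, 0, 0, -(1+ν₁);
                   0, -1, 1+ν₁, 0]) :
    (2*(s^2 + ν₂))^2 - 4*((s^2 - ν₂)^2) = 16 * s^2 * ν₂ ∧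
    (0 ≤ ν₂ → ∀ η : ℝ, η^2 + 2*(s^2 + ν₂)*η + (s^2 - ν₂)^2 = 0 ↔
      η = -(s^2 + ν₂) + 2 * |s| * Real.sqrt ν₂ ∨ η = -(s^2 + ν₂) - 2 * |s| * Real.sqrt ν₂) ∧
    (0 < ν₂ → s ≠ 0 → s^2 ≠ ν₂ →
      ∀ lam ∈ spectrum ℂ (Bν.map Complex.ofReal), lam.re = 0 ∧ lam ≠ 0) ∧
    (ν₂ < 0 → s ≠ 0 →
      ∀ lam ∈ spectrum ℂ (Bν.map Complex.ofReal), lam.re ≠ 0) := by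
  have hB : Bν.map Complex.ofReal = versalDeformation (s : ℂ) ν₂ := by
    rw [hBν, hs]
    exact versalDeformation_map Complex.ofRealHom (1 + ν₁) ν₂
  rw [hB]
  refine ⟨by ring, fun hν η => sq_add_two_mul_add_eq_zero_iff (sq_two_mul_abs_mul_sqrt hν),
    fun hν _ hsν _ => re_eq_zero_and_ne_zero_of_mem_spectrum_versalDeformation hν hsν,
    fun hν hs0 _ => re_ne_zero_of_mem_spectrum_versalDeformation hν hs0⟩
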